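/- Every Nekrasov matrix A ∈ ℂ^{n×n}, n ≥ 2, is a nonsingular H-matrix: its comparison matrix ⟨A⟩ is an M-matrix, i.e., ⟨A⟩ is invertible with entrywise nonnegative inverse. -/

import Mathlib

open Matrix

attribute [local instance] Matrix.linftyOpNormedAddCommGroup

/-- Deleted i-th row sum r_i(A). -/
noncomputable def rowSum {n : ℕ} (A : Matrix (Fin n) (Fin n) ℂ) (i : Fin n) : ℝ :=
  ∑ j ∈ Finset.univ.erase i, ‖A i j‖

/-- Recursive Nekrasov quantities h_i(A). -/
noncomputable def nekH {n : ℕ} (A : Matrix (Fin n) (Fin n) ℂ) : Fin n → ℝ :=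
  fun i =>
    (∑ j : {j : Fin n // j < i}, ‖A i j.1‖ * nekH A j.1 / ‖A j.1 j.1‖) +
      ∑ j ∈ Finset.univ.filter (fun j => i < j), ‖A i j‖
  termination_by i => (i : ℕ)
  decreasing_by exact j.2

/-- Recursive quantities z_i(A). -/
noncomputable def nekZ {n : ℕ} (A : Matrix (Fin n) (Fin n) ℂ) : Fin n → ℝ :=
  fun i => (∑ j : {j : Fin n // j < i}, ‖A i j.1‖ / ‖A j.1 j.1‖ * nekZ A j.1) + 1
  termination_by i => (i : ℕ)
  decreasing_by exact j.2

/-- |D| : entrywise absolute value of the diagonal part. -/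
noncomputable def absD {n : ℕ} (A : Matrix (Fin n) (Fin n) ℂ) : Matrix (Fin n) (Fin n) ℝ :=
  Matrix.of fun i j => if i = j then ‖A i j‖ else 0

/-- |L| : entrywise absolute value of the strictly lower triangular part. -/
noncomputable def absL {n : ℕ} (A : Matrix (Fin n) (Fin n) ℂ) : Matrix (Fin n) (Fin n) ℝ :=
  Matrix.of fun i j => if j < i then ‖A i j‖ else 0

/-- |U| : entrywise absolute value of the strictly upper triangular part. -/
noncomputable def absU {n : ℕ} (A : Matrix (Fin n) (Fin n) ℂ) : Matrix (Fin n) (Fin n) ℝ :=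
  Matrix.of fun i j => if i < j then ‖A i j‖ else 0

/-- Comparison matrix ⟨A⟩. -/
noncomputable def cmpM {n : ℕ} (A : Matrix (Fin n) (Fin n) ℂ) : Matrix (Fin n) (Fin n) ℝ :=
  Matrix.of fun i j => if i = j then ‖A i j‖ else -‖A i j‖

/- ### Auxiliary lemmas -/

attribute [local instance] Matrix.linftyOpNormedRing Matrix.linftyOpNormedAlgebra
open scoped NNReal

lemma nekH_nonneg {n : ℕ} (A : Matrix (Fin n) (Fin n) ℂ) (i : Fin n) : 0 ≤ nekH A i := by
  rw [nekH]
  refine add_nonneg (Finset.sum_nonneg fun j _ => ?_) (Finset.sum_nonneg fun j _ => norm_nonneg _)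
  exact div_nonneg (mul_nonneg (norm_nonneg _) (nekH_nonneg A j.1)) (norm_nonneg _)
  termination_by (i : ℕ)
  decreasing_by exact j.2

lemma nekZ_one_le {n : ℕ} (A : Matrix (Fin n) (Fin n) ℂ) (i : Fin n) : 1 ≤ nekZ A i := by
  rw [nekZ]
  refine le_add_of_nonneg_left (Finset.sum_nonneg fun j _ => ?_)
  exact mul_nonneg (div_nonneg (norm_nonneg _) (norm_nonneg _))
    (le_trans zero_le_one (nekZ_one_le A j.1))
  termination_by (i : ℕ)
  decreasing_by exact j.2

lemma nekH_eq_filter {n : ℕ} (A : Matrix (Fin n) (Fin n) ℂ) (i : Fin n) :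
    nekH A i = (∑ j ∈ Finset.univ.filter (fun j => j < i), ‖A i j‖ * nekH A j / ‖A j j‖) +
      ∑ j ∈ Finset.univ.filter (fun j => i < j), ‖A i j‖ := by
  rw [nekH]
  congr 1
  exact (Finset.sum_subtype _ (by simp) (fun j => ‖A i j‖ * nekH A j / ‖A j j‖)).symm

lemma nekZ_eq_filter {n : ℕ} (A : Matrix (Fin n) (Fin n) ℂ) (i : Fin n) :
    nekZ A i = (∑ j ∈ Finset.univ.filter (fun j => j < i), ‖A i j‖ / ‖A j j‖ * nekZ A j) + 1 := by
  rw [nekZ]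
  congr 1
  exact (Finset.sum_subtype _ (by simp) (fun j => ‖A i j‖ / ‖A j j‖ * nekZ A j)).symm

lemma erase_eq_lt_union_gt {n : ℕ} (i : Fin n) :
    (Finset.univ : Finset (Fin n)).erase i =
      Finset.univ.filter (fun j => j < i) ∪ Finset.univ.filter (fun j => i < j) := by
  ext j
  simp only [Finset.mem_erase, Finset.mem_union, Finset.mem_filter, Finset.mem_univ,
    and_true, true_and]
  constructor
  · intro h
    rcases lt_or_gt_of_ne h with h' | h'
    · exact Or.inl h'
    · exact Or.inr h'
  · rintro (h | h)
    · exact ne_of_lt h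
    · exact ne_of_gt h

lemma disj_lt_gt {n : ℕ} (i : Fin n) :
    Disjoint (Finset.univ.filter (fun j : Fin n => j < i))
      (Finset.univ.filter (fun j => i < j)) := by
  rw [Finset.disjoint_left]
  intro j h1 h2
  simp only [Finset.mem_filter] at h1 h2
  exact absurd h2.2 (not_lt_of_gt h1.2)

/-- Every Nekrasov matrix is a nonsingular H-matrix: ⟨A⟩ is invertible
    with entrywise nonnegative inverse. -/
theorem stmt14 {n : ℕ} (hn : 2 ≤ n) (A : Matrix (Fin n) (Fin n) ℂ)
    (hNek : ∀ i, nekH A i < ‖A i i‖) :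
    IsUnit (cmpM A) ∧ ∀ i j, 0 ≤ (cmpM A)⁻¹ i j := by
  have hH0 : ∀ i, 0 ≤ nekH A i := nekH_nonneg A
  have hZ1 : ∀ i, 1 ≤ nekZ A i := nekZ_one_le A
  have hZ0 : ∀ i, 0 < nekZ A i := fun i => lt_of_lt_of_le one_pos (hZ1 i)
  have haii : ∀ i, 0 < ‖A i i‖ := fun i => (hH0 i).trans_lt (hNek i)
  haveI : Nonempty (Fin n) := ⟨⟨0, by omega⟩⟩
  set ε : ℝ := Finset.univ.inf' Finset.univ_nonempty
      (fun j => (‖A j j‖ - nekH A j) / nekZ A j) with hεdef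
  have hεpos : 0 < ε := by
    rw [hεdef, Finset.lt_inf'_iff]
    intro j _
    exact div_pos (sub_pos.2 (hNek j)) (hZ0 j)
  have hεle : ∀ j, nekH A j + ε * nekZ A j ≤ ‖A j j‖ := by
    intro j
    have h1 : ε ≤ (‖A j j‖ - nekH A j) / nekZ A j :=
      Finset.inf'_le _ (Finset.mem_univ j)
    have h2 : ε * nekZ A j ≤ (‖A j j‖ - nekH A j) / nekZ A j * nekZ A j :=
      mul_le_mul_of_nonneg_right h1 (le_of_lt (hZ0 j))
    rw [div_mul_cancel₀ _ (ne_of_gt (hZ0 j))] at h2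
    linarith
  set v : Fin n → ℝ := fun i => (nekH A i + ε * nekZ A i) / ‖A i i‖ with hvdef
  have hvpos : ∀ i, 0 < v i := fun i =>
    div_pos (add_pos_of_nonneg_of_pos (hH0 i) (mul_pos hεpos (hZ0 i))) (haii i)
  have hvle1 : ∀ i, v i ≤ 1 := fun i => (div_le_one (haii i)).2 (hεle i)
  have hmv : ∀ i, ‖A i i‖ * v i = nekH A i + ε * nekZ A i := by
    intro i
    rw [hvdef, mul_comm, div_mul_cancel₀ _ (ne_of_gt (haii i))]
  -- key inequality: strict generalized diagonal dominance
  have key : ∀ i, ∑ j ∈ Finset.univ.erase i, ‖A i j‖ * v j < ‖A i i‖ * v i := by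
    intro i
    rw [erase_eq_lt_union_gt i, Finset.sum_union (disj_lt_gt i), hmv i]
    have e1 : ∑ j ∈ Finset.univ.filter (fun j => j < i), ‖A i j‖ * v j =
        (∑ j ∈ Finset.univ.filter (fun j => j < i), ‖A i j‖ * nekH A j / ‖A j j‖) +
          ε * ∑ j ∈ Finset.univ.filter (fun j => j < i), ‖A i j‖ / ‖A j j‖ * nekZ A j := by
      rw [Finset.mul_sum, ← Finset.sum_add_distrib]
      refine Finset.sum_congr rfl fun j _ => ?_
      have hj := ne_of_gt (haii j)
      simp only [hvdef]
      field_simp [hvdef]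
    have e2 : ∑ j ∈ Finset.univ.filter (fun j => i < j), ‖A i j‖ * v j ≤
        ∑ j ∈ Finset.univ.filter (fun j => i < j), ‖A i j‖ := by
      refine Finset.sum_le_sum fun j _ => ?_
      calc ‖A i j‖ * v j ≤ ‖A i j‖ * 1 :=
            mul_le_mul_of_nonneg_left (hvle1 j) (norm_nonneg _)
        _ = ‖A i j‖ := mul_one _
    have eH := nekH_eq_filter A i
    have eZ := nekZ_eq_filter A i
    have hε1 : ε * nekZ A i =
        ε * (∑ j ∈ Finset.univ.filter (fun j => j < i), ‖A i j‖ / ‖A j j‖ * nekZ A j) + ε := by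
      rw [eZ]; ring
    linarith
  -- the scaled iteration matrix
  set d : Fin n → ℝ := fun i => ‖A i i‖ * v i with hddef
  have hdpos : ∀ i, 0 < d i := fun i => mul_pos (haii i) (hvpos i)
  set B : Matrix (Fin n) (Fin n) ℝ :=
    Matrix.of (fun i j => if i = j then 0 else ‖A i j‖ * v j / d i) with hBdef
  have hB0 : ∀ i j, 0 ≤ B i j := by
    intro i j
    rw [hBdef]
    simp only [Matrix.of_apply]
    split_ifs
    · exact le_refl 0
    · exact div_nonneg (mul_nonneg (norm_nonneg _) (le_of_lt (hvpos j))) (le_of_lt (hdpos i))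
  have hBnorm : ‖B‖ < 1 := by
    have hrow : ∀ i, ∑ j, ‖B i j‖ < 1 := by
      intro i
      have hBii : B i i = 0 := by simp [hBdef]
      have h1 : ∀ j, ‖B i j‖ = B i j := fun j => Real.norm_of_nonneg (hB0 i j)
      have h2 : ∑ j ∈ Finset.univ.erase i, B i j + B i i = ∑ j, B i j :=
        Finset.sum_erase_add _ _ (Finset.mem_univ i)
      have h3 : ∑ j ∈ Finset.univ.erase i, B i j =
          (∑ j ∈ Finset.univ.erase i, ‖A i j‖ * v j) / d i := by
        rw [Finset.sum_div]
        refine Finset.sum_congr rfl fun j hj => ?_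
        have hji : j ≠ i := Finset.ne_of_mem_erase hj
        rw [hBdef]
        simp only [Matrix.of_apply]
        rw [if_neg (fun h => hji h.symm)]
      have h4 : (∑ j ∈ Finset.univ.erase i, ‖A i j‖ * v j) / d i < 1 :=
        (div_lt_one (hdpos i)).2 (key i)
      calc ∑ j, ‖B i j‖ = ∑ j, B i j := Finset.sum_congr rfl fun j _ => h1 j
        _ = ∑ j ∈ Finset.univ.erase i, B i j := by rw [← h2, hBii, add_zero]
        _ < 1 := by rw [h3]; exact h4
    rw [Matrix.linfty_opNorm_def]
    have h : ((Finset.univ.sup fun i => ∑ j, ‖B i j‖₊) : ℝ≥0) < 1 := by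
      rw [Finset.sup_lt_iff (by norm_num : (⊥ : ℝ≥0) < 1)]
      intro i _
      rw [← NNReal.coe_lt_coe]
      push_cast
      simpa using hrow i
    exact_mod_cast h
  have hfact : cmpM A = Matrix.diagonal d * (1 - B) *
      Matrix.diagonal (fun i => (v i)⁻¹) := by
    ext i j
    simp only [Matrix.mul_diagonal, Matrix.diagonal_mul, Matrix.sub_apply, Matrix.one_apply,
      Matrix.of_apply, cmpM, hBdef]
    by_cases h : i = j
    · subst h
      simp only [if_pos rfl]
      norm_num
      rw [show d i = ‖A i i‖ * v i from rfl, mul_assoc,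
        mul_inv_cancel₀ (ne_of_gt (hvpos i)), mul_one]
    · simp only [if_neg h]
      rw [zero_sub, mul_neg, neg_mul]
      congr 1
      rw [mul_comm (d i) (‖A i j‖ * v j / d i), div_mul_cancel₀ _ (ne_of_gt (hdpos i)),
        mul_assoc, mul_inv_cancel₀ (ne_of_gt (hvpos j)), mul_one]
  have hu1B : IsUnit (1 - B) := isUnit_one_sub_of_norm_lt_one hBnorm
  have h1 : Matrix.diagonal (fun i => (v i)⁻¹) * Matrix.diagonal v = 1 := by
    rw [Matrix.diagonal_mul_diagonal]
    rw [show (fun i => (v i)⁻¹ * v i) = fun _ => (1 : ℝ) from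
      funext fun i => inv_mul_cancel₀ (ne_of_gt (hvpos i))]
    exact Matrix.diagonal_one
  have h2 : (1 - B) * (1 - B)⁻¹ = 1 :=
    Matrix.mul_nonsing_inv _ ((Matrix.isUnit_iff_isUnit_det _).mp hu1B)
  have h3 : Matrix.diagonal d * Matrix.diagonal (fun i => (d i)⁻¹) = 1 := by
    rw [Matrix.diagonal_mul_diagonal]
    rw [show (fun i => d i * (d i)⁻¹) = fun _ => (1 : ℝ) from
      funext fun i => mul_inv_cancel₀ (ne_of_gt (hdpos i))]
    exact Matrix.diagonal_one
  have hright : cmpM A *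
      (Matrix.diagonal v * ((1 - B)⁻¹ * Matrix.diagonal (fun i => (d i)⁻¹))) = 1 := by
    rw [hfact]
    simp only [Matrix.mul_assoc]
    rw [← Matrix.mul_assoc (Matrix.diagonal (fun i => (v i)⁻¹)) (Matrix.diagonal v), h1,
      Matrix.one_mul, ← Matrix.mul_assoc (1 - B) (1 - B)⁻¹, h2, Matrix.one_mul, h3]
  have hinv : (cmpM A)⁻¹ =
      Matrix.diagonal v * ((1 - B)⁻¹ * Matrix.diagonal (fun i => (d i)⁻¹)) :=
    Matrix.inv_eq_right_inv hright
  have hCnn : ∀ i j, 0 ≤ (1 - B)⁻¹ i j := by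
    have hpow : ∀ k, ∀ i j : Fin n, 0 ≤ (B ^ k) i j := by
      intro k
      induction k with
      | zero => intro i j; rw [pow_zero, Matrix.one_apply]; split_ifs <;> norm_num
      | succ k ih =>
        intro i j; rw [pow_succ, Matrix.mul_apply]
        exact Finset.sum_nonneg fun l _ => mul_nonneg (ih i l) (hB0 l j)
    have hueq : (1 - B)⁻¹ = ∑' k, B ^ k := by
      calc (1 - B)⁻¹
          = ((Units.oneSub B hBnorm : (Matrix (Fin n) (Fin n) ℝ)ˣ) :
              Matrix (Fin n) (Fin n) ℝ)⁻¹ := by rw [Units.val_oneSub]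
        _ = ((Units.oneSub B hBnorm)⁻¹ : (Matrix (Fin n) (Fin n) ℝ)ˣ) :=
              (Matrix.coe_units_inv _).symm
        _ = ∑' k, B ^ k := rfl
    intro i j
    rw [hueq]
    have hsum : Summable (fun k => B ^ k) := summable_geometric_of_norm_lt_one hBnorm
    let φ : Matrix (Fin n) (Fin n) ℝ →ₗ[ℝ] ℝ :=
      { toFun := fun M => M i j
        map_add' := fun _ _ => rfl
        map_smul' := fun _ _ => rfl }
    let ψ : Matrix (Fin n) (Fin n) ℝ →L[ℝ] ℝ := LinearMap.toContinuousLinearMap φ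
    have he : (∑' k, B ^ k) i j = ∑' k, (B ^ k) i j := ψ.map_tsum hsum
    rw [he]
    exact tsum_nonneg fun k => hpow k i j
  constructor
  · exact (Matrix.isUnit_iff_isUnit_det _).mpr (Matrix.isUnit_det_of_right_inverse hright)
  · intro i j
    rw [hinv, Matrix.diagonal_mul, Matrix.mul_diagonal]
    exact mul_nonneg (le_of_lt (hvpos i))
      (mul_nonneg (hCnn i j) (le_of_lt (inv_pos.2 (hdpos j))))
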